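/- Let α, β ∈ (0, 2π) with α, β, π linearly independent over ℚ, and set ρ̂(n) = (e^{−inα} + e^{−inβ})/2. Then the closure of {ρ̂(n) : n ∈ 2ℤ+1} (values at odd integers) equals the closed unit disk. -/

import Mathlib

/-!
For `a = α/π`, `b = β/π`, the value at `2n + 1` is `F (n a + m, n b + k)` for every `m k : ℤ`, where
`F (x, y) = (e^{-i(2πx + α)} + e^{-i(2πy + β)}) / 2` is continuous with range the closed unit disk
(every point of the disk is the midpoint of two points of the circle). So it suffices that
`ℤ (a, b) + ℤ²` is dense in `ℝ²` (Kronecker). Since `a` is irrational this subgroup has infinitely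
many points in the unit square, hence arbitrarily short nonzero vectors; their directions
accumulate at some `u`, and the whole line `ℝ u` lies in the closure. A functional `f` with kernel
`ℝ u` maps the subgroup onto a subgroup of `ℝ` which cannot be cyclic by the independence of
`a, b, 1`, so it is dense, and then so is the subgroup.
-/

open Complex Real Set Filter Topology Metric

section SmallElements

variable {E : Type*} [NormedAddCommGroup E]

theorem AddSubgroup.exists_ne_zero_norm_lt_of_infinite_inter_isCompact (G : AddSubgroup E)
    {K : Set E} (hK : IsCompact K) (hinf : ((G : Set E) ∩ K).Infinite) {ε : ℝ} (hε : 0 < ε) :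
    ∃ g ∈ G, g ≠ 0 ∧ ‖g‖ < ε := by
  obtain ⟨x, -, hx⟩ := hinf.exists_accPt_of_subset_isCompact hK inter_subset_right
  rw [accPt_iff_nhds] at hx
  obtain ⟨y, ⟨hyx, hyG, -⟩, hyne⟩ := hx (ball x (ε / 2)) (ball_mem_nhds _ (half_pos hε))
  obtain ⟨z, ⟨hzx, hzG, -⟩, -⟩ := hx (ball x (dist y x)) (ball_mem_nhds _ (dist_pos.2 hyne))
  rw [mem_ball] at hyx hzx
  refine ⟨y - z, G.sub_mem hyG hzG, sub_ne_zero.2 fun hyz => hzx.ne (by rw [hyz]), ?_⟩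
  calc ‖y - z‖ = dist y z := (dist_eq_norm y z).symm
    _ ≤ dist y x + dist z x := dist_triangle_right y z x
    _ < ε := by linarith

end SmallElements

section LineInClosure

variable {E : Type*} [NormedAddCommGroup E] [NormedSpace ℝ E]

theorem norm_floor_zsmul_sub_smul_le (s : ℝ) (g : E) : ‖⌊s⌋ • g - s • g‖ ≤ ‖g‖ := by
  rw [← Int.cast_smul_eq_zsmul ℝ, ← sub_smul, norm_smul, ← neg_sub, norm_neg, ← Int.fract,
    Real.norm_of_nonneg (Int.fract_nonneg s)]
  exact mul_le_of_le_one_left (norm_nonneg g) (Int.fract_lt_one s).le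

theorem AddSubgroup.exists_ne_zero_forall_smul_mem_topologicalClosure [ProperSpace E]
    (G : AddSubgroup E) (hG : ∀ ε > 0, ∃ g ∈ G, g ≠ 0 ∧ ‖g‖ < ε) :
    ∃ u : E, u ≠ 0 ∧ ∀ t : ℝ, t • u ∈ G.topologicalClosure := by
  choose g hgG hg0 hgε using fun k : ℕ => hG (1 / (k + 1)) Nat.one_div_pos_of_nat
  have hg_lim : Tendsto (fun k => ‖g k‖) atTop (𝓝 0) :=
    squeeze_zero (fun k => norm_nonneg _) (fun k => (hgε k).le)
      tendsto_one_div_add_atTop_nhds_zero_nat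
  have hunit : ∀ k, ‖g k‖⁻¹ • g k ∈ sphere (0 : E) 1 := fun k => by
    simp [norm_smul, hg0 k]
  obtain ⟨u, hu, φ, hφ, hu_lim⟩ := (isCompact_sphere (0 : E) 1).tendsto_subseq hunit
  refine ⟨u, ne_zero_of_mem_unit_sphere ⟨u, hu⟩, fun t => ?_⟩
  have hclose : Tendsto (fun j => ⌊t / ‖g (φ j)‖⌋ • g (φ j) - t • (‖g (φ j)‖⁻¹ • g (φ j)))
      atTop (𝓝 0) := by
    refine squeeze_zero_norm (fun j => ?_) (hg_lim.comp hφ.tendsto_atTop)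
    rw [smul_smul, ← div_eq_mul_inv]
    exact norm_floor_zsmul_sub_smul_le _ _
  have hlim : Tendsto (fun j => ⌊t / ‖g (φ j)‖⌋ • g (φ j)) atTop (𝓝 (t • u)) := by
    simpa using hclose.add (hu_lim.const_smul t)
  exact mem_closure_of_tendsto hlim (Eventually.of_forall fun j => G.zsmul_mem (hgG _) _)

end LineInClosure

theorem AddSubgroup.dense_of_ker_subset_topologicalClosure {𝕜 E : Type*}
    [NontriviallyNormedField 𝕜] [CompleteSpace 𝕜]
    [NormedAddCommGroup E] [NormedSpace 𝕜 E] [CompleteSpace E]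
    (G : AddSubgroup E) {f : E →L[𝕜] 𝕜} (hf : f ≠ 0)
    (hker : ∀ v, f v = 0 → v ∈ G.topologicalClosure) (hdense : Dense (f '' G)) :
    Dense (G : Set E) := by
  have hsurj : Function.Surjective f :=
    LinearMap.surjective_of_ne_zero (f := (f : E →ₗ[𝕜] 𝕜)) fun h =>
      hf (by ext v; simpa using LinearMap.congr_fun h v)
  have : Dense (G.topologicalClosure : Set E) := by
    refine (hdense.preimage (f.isOpenMap hsurj)).mono ?_
    rintro x ⟨g, hg, hgx⟩
    have hxg : x - g ∈ G.topologicalClosure := hker _ (by simp [hgx])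
    have := G.topologicalClosure.add_mem hxg (G.le_topologicalClosure hg)
    rwa [sub_add_cancel] at this
  exact dense_closure.mp this

theorem LinearIndependent.intCast_combination_eq_zero {x y z : ℝ}
    (h : LinearIndependent ℚ ![x, y, z]) {p q r : ℤ} (hpqr : p * x + q * y + r * z = 0) :
    p = 0 ∧ q = 0 ∧ r = 0 := by
  have := Fintype.linearIndependent_iff.mp h ![p, q, r] (by
    simpa [Fin.sum_univ_three, Rat.smul_def] using hpqr)
  exact ⟨by simpa using this 0, by simpa using this 1, by simpa using this 2⟩

theorem irrational_of_linearIndependent {x y : ℝ} (h : LinearIndependent ℚ ![x, y, 1]) :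
    Irrational x := by
  rintro ⟨q, rfl⟩
  have hrel : ((q.den : ℤ) : ℝ) * q + ((0 : ℤ) : ℝ) * y + ((-q.num : ℤ) : ℝ) * 1 = 0 := by
    rw [Rat.cast_def]
    push_cast
    field_simp
    ring
  exact q.den_ne_zero (by exact_mod_cast (h.intCast_combination_eq_zero hrel).1)

theorem LinearIndependent.div_const {ι : Type*} {v : ι → ℝ} (hv : LinearIndependent ℚ v)
    {c : ℝ} (hc : c ≠ 0) : LinearIndependent ℚ fun i => v i / c := by
  refine hv.map' ((LinearMap.mulRight ℝ c⁻¹).restrictScalars ℚ) ?_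
  rw [LinearMap.ker_eq_bot']
  intro x hx
  simpa [hc] using hx

def kroneckerSubgroup (a b : ℝ) : AddSubgroup (ℝ × ℝ) where
  carrier := {v | ∃ n m k : ℤ, v = (n * a + m, n * b + k)}
  add_mem' := by
    rintro _ _ ⟨n, m, k, rfl⟩ ⟨n', m', k', rfl⟩
    exact ⟨n + n', m + m', k + k', by ext <;> simp <;> ring⟩
  zero_mem' := ⟨0, 0, 0, by ext <;> simp⟩
  neg_mem' := by
    rintro _ ⟨n, m, k, rfl⟩
    exact ⟨-n, -m, -k, by ext <;> simp <;> ring⟩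

namespace kroneckerSubgroup

variable {a b : ℝ}

theorem inter_unitSquare_infinite (ha : Irrational a) (b : ℝ) :
    ((kroneckerSubgroup a b : Set (ℝ × ℝ)) ∩ Icc 0 1 ×ˢ Icc 0 1).Infinite := by
  let p : ℕ → ℝ × ℝ := fun n => (Int.fract (n * a), Int.fract (n * b))
  have hinj : p.Injective := by
    intro n m hnm
    obtain ⟨z, hz⟩ := Int.fract_eq_fract.mp congr(($hnm).1)
    by_contra hne
    have hsub : ((n - m : ℤ) : ℝ) * a = z := by push_cast; linarith
    exact (ha.intCast_mul (sub_ne_zero.2 (Nat.cast_injective.ne hne))).ne_int z hsub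
  refine infinite_of_injective_forall_mem hinj fun n => ⟨?_, ?_⟩
  · exact ⟨n, -⌊n * a⌋, -⌊n * b⌋, by simp [p, Int.fract, sub_eq_add_neg]⟩
  · exact ⟨⟨Int.fract_nonneg _, (Int.fract_lt_one _).le⟩,
      Int.fract_nonneg _, (Int.fract_lt_one _).le⟩

theorem dense_image (h : LinearIndependent ℚ ![a, b, 1]) {f : ℝ × ℝ →L[ℝ] ℝ} (hf : f ≠ 0) :
    Dense (f '' kroneckerSubgroup a b) := by
  have hf_apply (v : ℝ × ℝ) : f v = v.1 * f (1, 0) + v.2 * f (0, 1) := by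
    rw [← smul_eq_mul, ← smul_eq_mul, ← map_smul, ← map_smul, ← map_add]
    congr 1
    ext <;> simp
  change Dense ((kroneckerSubgroup a b).map (f : ℝ × ℝ →+ ℝ) : Set ℝ)
  rw [AddSubgroup.dense_iff_ne_zmultiples]
  intro c hc
  have hmem (v : ℝ × ℝ) (hv : v ∈ kroneckerSubgroup a b) : ∃ k : ℤ, k * c = f v := by
    have : f v ∈ AddSubgroup.zmultiples c := hc ▸ AddSubgroup.mem_map_of_mem _ hv
    simpa [AddSubgroup.mem_zmultiples_iff] using this
  obtain ⟨p, hp⟩ := hmem (1, 0) ⟨0, 1, 0, by simp⟩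
  obtain ⟨q, hq⟩ := hmem (0, 1) ⟨0, 0, 1, by simp⟩
  obtain ⟨r, hr⟩ := hmem (a, b) ⟨1, 0, 0, by simp⟩
  -- `f (a, b) = a f (1, 0) + b f (0, 1)` makes `p a + q b - r` vanish unless `c = 0`
  have hbasis : f (1, 0) = 0 ∧ f (0, 1) = 0 := by
    rcases eq_or_ne c 0 with rfl | hc0
    · exact ⟨by simpa using hp.symm, by simpa using hq.symm⟩
    have hrel : p * a + q * b + (-r : ℤ) * 1 = 0 := by
      refine (mul_eq_zero.mp ?_).resolve_left hc0
      rw [hf_apply] at hr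
      push_cast
      linear_combination (a * hp + b * hq - hr)
    obtain ⟨rfl, rfl, -⟩ := h.intCast_combination_eq_zero hrel
    exact ⟨by simpa using hp.symm, by simpa using hq.symm⟩
  exact hf (ContinuousLinearMap.ext fun v => by simp [hf_apply v, hbasis])

end kroneckerSubgroup

theorem Prod.exists_smul_eq_of_mul_sub_mul_eq_zero {u v : ℝ × ℝ} (hu : u ≠ 0)
    (h : u.1 * v.2 - u.2 * v.1 = 0) : ∃ t : ℝ, t • u = v := by
  have hρ : u.1 ^ 2 + u.2 ^ 2 ≠ 0 := by
    contrapose! hu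
    obtain ⟨h1, h2⟩ := (add_eq_zero_iff_of_nonneg (sq_nonneg _) (sq_nonneg _)).mp hu
    exact Prod.ext (pow_eq_zero_iff two_ne_zero |>.mp h1) (pow_eq_zero_iff two_ne_zero |>.mp h2)
  refine ⟨(u.1 * v.1 + u.2 * v.2) / (u.1 ^ 2 + u.2 ^ 2), Prod.ext ?_ ?_⟩
  · simp only [Prod.smul_fst, smul_eq_mul]
    field_simp
    linear_combination u.2 * h
  · simp only [Prod.smul_snd, smul_eq_mul]
    field_simp
    linear_combination -u.1 * h

theorem dense_kroneckerSubgroup {a b : ℝ} (h : LinearIndependent ℚ ![a, b, 1]) :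
    Dense (kroneckerSubgroup a b : Set (ℝ × ℝ)) := by
  set G := kroneckerSubgroup a b
  obtain ⟨u, hu, hline⟩ := G.exists_ne_zero_forall_smul_mem_topologicalClosure fun ε hε =>
    G.exists_ne_zero_norm_lt_of_infinite_inter_isCompact (isCompact_Icc.prod isCompact_Icc)
      (kroneckerSubgroup.inter_unitSquare_infinite (irrational_of_linearIndependent h) b) hε
  -- `f v = det (u, v)` vanishes exactly on the line `ℝ u`
  let f : ℝ × ℝ →L[ℝ] ℝ :=
    u.1 • ContinuousLinearMap.snd ℝ ℝ ℝ - u.2 • ContinuousLinearMap.fst ℝ ℝ ℝ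
  have hf : f ≠ 0 := by
    intro hf0
    have h1 : u.1 = 0 := by simpa [f] using congr($hf0 (0, 1))
    have h2 : u.2 = 0 := by simpa [f] using congr($hf0 (1, 0))
    exact hu (Prod.ext h1 h2)
  refine G.dense_of_ker_subset_topologicalClosure hf (fun v hv => ?_)
    (kroneckerSubgroup.dense_image h hf)
  obtain ⟨t, rfl⟩ := Prod.exists_smul_eq_of_mul_sub_mul_eq_zero hu (by simpa [f] using hv)
  exact hline t

theorem range_exp_mul_I_add_exp_mul_I_div_two :
    range (fun p : ℝ × ℝ => (exp (p.1 * I) + exp (p.2 * I)) / 2) = closedBall (0 : ℂ) 1 := by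
  refine Subset.antisymm ?_ fun w hw => ?_
  · rintro _ ⟨p, rfl⟩
    rw [mem_closedBall_zero_iff, norm_div, Complex.norm_two]
    calc ‖exp (p.1 * I) + exp (p.2 * I)‖ / 2
        ≤ (‖exp (p.1 * I)‖ + ‖exp (p.2 * I)‖) / 2 := by gcongr; exact norm_add_le _ _
      _ = 1 := by simp [Complex.norm_exp_ofReal_mul_I]
  · rw [mem_closedBall_zero_iff] at hw
    -- `e^{i(θ + δ)} + e^{i(θ - δ)} = 2 cos δ e^{iθ}`, with `θ = arg w` and `cos δ = ‖w‖`
    refine ⟨(arg w + arccos ‖w‖, arg w - arccos ‖w‖), ?_⟩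
    have hcos : (Real.cos (arccos ‖w‖) : ℂ) = ‖w‖ := by
      rw [Real.cos_arccos (by linarith [norm_nonneg w]) hw]
    calc (exp (↑(arg w + arccos ‖w‖) * I) + exp (↑(arg w - arccos ‖w‖) * I)) / 2
        = (Real.cos (arccos ‖w‖) : ℂ) * exp (arg w * I) := by
          simp only [Complex.ofReal_cos, Complex.cos, Complex.ofReal_add, Complex.ofReal_sub,
            add_mul, sub_mul, neg_mul, Complex.exp_add, Complex.exp_sub, Complex.exp_neg]
          field_simp
      _ = w := by rw [hcos, Complex.norm_mul_exp_arg_mul_I]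

theorem exp_neg_two_pi_mul_add_mul_I (x : ℝ) (n m : ℤ) :
    exp (↑(-(2 * π * (n * (x / π) + m) + x)) * I) = exp (-(((2 * n + 1 : ℤ) : ℂ) * x) * I) := by
  rw [show (↑(-(2 * π * (n * (x / π) + m) + x)) : ℂ) * I =
      -(((2 * n + 1 : ℤ) : ℂ) * x) * I + (-m : ℤ) * (2 * π * I) by
    push_cast; field_simp; ring, Complex.exp_add, exp_int_mul_two_pi_mul_I, mul_one]

theorem fourier_range_odd_dense_in_disk_general (α β : ℝ)
    (hind : LinearIndependent ℚ ![α, β, π]) :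
    closure {w : ℂ | ∃ n : ℤ,
        w = (Complex.exp (-(((2 * n + 1 : ℤ) : ℂ) * (α : ℂ)) * Complex.I) +
             Complex.exp (-(((2 * n + 1 : ℤ) : ℂ) * (β : ℂ)) * Complex.I)) / 2} =
      Metric.closedBall (0 : ℂ) 1 := by
  have hab : LinearIndependent ℚ ![α / π, β / π, 1] := by
    convert hind.div_const pi_ne_zero using 1
    ext i
    fin_cases i <;> simp [pi_ne_zero]
  let Φ : ℝ × ℝ → ℂ := fun p => (exp (p.1 * I) + exp (p.2 * I)) / 2
  let A : ℝ × ℝ → ℝ × ℝ := fun v => (-(2 * π * v.1 + α), -(2 * π * v.2 + β))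
  have hA : A.Surjective := fun p =>
    ⟨(-(p.1 + α) / (2 * π), -(p.2 + β) / (2 * π)), by
      ext <;> simp only [A] <;> field_simp <;> ring⟩
  have hset : {w : ℂ | ∃ n : ℤ,
        w = (Complex.exp (-(((2 * n + 1 : ℤ) : ℂ) * (α : ℂ)) * Complex.I) +
             Complex.exp (-(((2 * n + 1 : ℤ) : ℂ) * (β : ℂ)) * Complex.I)) / 2} =
      (Φ ∘ A) '' kroneckerSubgroup (α / π) (β / π) := by
    ext w
    constructor
    · rintro ⟨n, rfl⟩
      refine ⟨(n * (α / π) + (0 : ℤ), n * (β / π) + (0 : ℤ)), ⟨n, 0, 0, rfl⟩, ?_⟩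
      simp only [Function.comp_apply, Φ, A, exp_neg_two_pi_mul_add_mul_I]
    · rintro ⟨_, ⟨n, m, k, rfl⟩, rfl⟩
      exact ⟨n, by simp only [Function.comp_apply, Φ, A, exp_neg_two_pi_mul_add_mul_I]⟩
  rw [hset, ← closure_image_closure (by fun_prop), (dense_kroneckerSubgroup hab).closure_eq,
    image_univ, hA.range_comp, range_exp_mul_I_add_exp_mul_I_div_two,
    isClosed_closedBall.closure_eq]

/-- The values ρ̂(n) at odd integers n are dense in the closed unit disk. -/
theorem fourier_range_odd_dense_in_disk (α β : ℝ)
    (hα : α ∈ Set.Ioo (0 : ℝ) (2 * π)) (hβ : β ∈ Set.Ioo (0 : ℝ) (2 * π))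
    (hind : LinearIndependent ℚ ![α, β, π]) :
    closure {w : ℂ | ∃ n : ℤ,
        w = (Complex.exp (-(((2 * n + 1 : ℤ) : ℂ) * (α : ℂ)) * Complex.I) +
             Complex.exp (-(((2 * n + 1 : ℤ) : ℂ) * (β : ℂ)) * Complex.I)) / 2} =
      Metric.closedBall (0 : ℂ) 1 :=
  fourier_range_odd_dense_in_disk_general α β hind
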